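/- arXiv:1804.00059 — 2 statements merged into one kernel-verified Lean document; each statement's English description precedes it below -/
import Mathlib

section
/- Let ω be a primitive n-th root of unity in a field F of characteristic 0. If f(z) = ωz + Σ aₖzᵏ and g(z) = ωz + Σ bₖzᵏ both have compositional order n and aₖ = bₖ for all k with k ≢ 1 (mod n), then f = g. -/
open PowerSeries

/-- Composition (substitution) of formal power series: coefficient formula,
valid for `g` with zero constant term. -/
noncomputable def PS.comp {F : Type*} [CommRing F] (f g : PowerSeries F) : PowerSeries F :=
  PowerSeries.mk fun k =>
    ∑ n ∈ Finset.range (k + 1), (PowerSeries.coeff (R := F) n f) * (PowerSeries.coeff (R := F) k (g ^ n))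

/-- The group `G` of series with zero constant term and nonzero linear coefficient. -/
def PS.G (F : Type*) [CommRing F] : Set (PowerSeries F) :=
  {f | PowerSeries.constantCoeff (R := F) f = 0 ∧ PowerSeries.coeff (R := F) 1 f ≠ 0}

/-- `n`-fold compositional iterate of `f`. -/
noncomputable def PS.iter {F : Type*} [CommRing F] (f : PowerSeries F) : ℕ → PowerSeries F
  | 0 => PowerSeries.X
  | n + 1 => PS.comp f (PS.iter f n)

/-- `f` has compositional order exactly `n`. -/
def PS.HasOrder {F : Type*} [CommRing F] (f : PowerSeries F) (n : ℕ) : Prop :=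
  PS.iter f n = PowerSeries.X ∧ ∀ m, 0 < m → m < n → PS.iter f m ≠ PowerSeries.X

/-!
Suppose `f ≡ g mod X^k` with `k ≥ 2`, `k ≡ 1 mod n`, and let `d = [X^k] f - [X^k] g`. When both
outer and inner series agree mod `X^k`, only two terms of the composition sum differ in degree `k`:
the linear one, carrying the difference of the inner series, and the `k`-th one, carrying
`(linear coefficient of the inner series)^k • d`. So the differences `D m` of the `X^k`-coefficients
of the `m`-th iterates satisfy `D (m + 1) = ω D m + ω^(mk) d`, and `ω^k = ω` gives
`D m = m ω^(m-1) d`. Both `n`-th iterates are `X`, so `n ω^(n-1) d = 0`, whence `d = 0` in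
characteristic `0`. Induction on `k` gives `f = g`.
-/

namespace PS

variable {R : Type*} [CommRing R]

theorem coeff_comp (f h : PowerSeries R) (k : ℕ) :
    coeff k (PS.comp f h) = ∑ i ∈ Finset.range (k + 1), coeff i f * coeff k (h ^ i) := by
  simp [PS.comp]

theorem constantCoeff_comp (f h : PowerSeries R) :
    constantCoeff (PS.comp f h) = constantCoeff f := by
  rw [← coeff_zero_eq_constantCoeff_apply, ← coeff_zero_eq_constantCoeff_apply, coeff_comp]
  simp

theorem coeff_one_comp (f h : PowerSeries R) :
    coeff 1 (PS.comp f h) = coeff 1 f * coeff 1 h := by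
  simp [coeff_comp, Finset.sum_range_succ, coeff_one]

theorem constantCoeff_iter {f : PowerSeries R} (hf : constantCoeff f = 0) (m : ℕ) :
    constantCoeff (PS.iter f m) = 0 := by
  cases m <;> simp [PS.iter, constantCoeff_comp, hf]

theorem coeff_one_iter (f : PowerSeries R) (m : ℕ) :
    coeff 1 (PS.iter f m) = coeff 1 f ^ m := by
  induction m with
  | zero => simp [PS.iter]
  | succ m ih => rw [PS.iter, coeff_one_comp, ih, pow_succ, mul_comm]

theorem coeff_eq_of_X_pow_dvd_sub {f g : PowerSeries R} {k i : ℕ} (h : X ^ k ∣ f - g)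
    (hi : i < k) : coeff i f = coeff i g :=
  sub_eq_zero.1 <| by rw [← map_sub]; exact X_pow_dvd_iff.1 h i hi

theorem ext_of_X_pow_dvd_sub {f g : PowerSeries R}
    (h : ∀ k, X ^ k ∣ f - g → coeff k f = coeff k g) : f = g := by
  ext k
  induction k using Nat.strong_induction_on with
  | _ k ih => exact h k <| X_pow_dvd_iff.2 fun i hi => by rw [map_sub, ih i hi, sub_self]

theorem coeff_pow_self {h : PowerSeries R} (h0 : constantCoeff h = 0) (k : ℕ) :
    coeff k (h ^ k) = coeff 1 h ^ k := by
  obtain ⟨u, rfl⟩ := X_dvd_iff.2 h0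
  rw [mul_pow, coeff_X_pow_mul', if_pos le_rfl, Nat.sub_self, coeff_zero_eq_constantCoeff_apply,
    map_pow, coeff_succ_X_mul, coeff_zero_eq_constantCoeff_apply]

theorem X_pow_succ_dvd_pow_sub_pow {h h' : PowerSeries R} {k j : ℕ} (h0 : constantCoeff h = 0)
    (h0' : constantCoeff h' = 0) (hh : X ^ k ∣ h - h') (hj : j ≠ 1) :
    X ^ (k + 1) ∣ h ^ j - h' ^ j := by
  obtain rfl | ⟨j, rfl⟩ : j = 0 ∨ ∃ i, j = i + 2 := by
    rcases j with _ | _ | j <;> simp_all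
  · simp
  have hX : X ∣ h := X_dvd_iff.2 h0
  have hX' : X ∣ h' := X_dvd_iff.2 h0'
  have hgeom : X ∣ ∑ i ∈ Finset.range (j + 2), h ^ i * h' ^ (j + 2 - 1 - i) := by
    refine Finset.dvd_sum fun i hi => ?_
    rcases Nat.eq_zero_or_pos i with rfl | hi0
    · exact Dvd.dvd.mul_left (dvd_pow hX' (by omega)) _
    · exact Dvd.dvd.mul_right (dvd_pow hX hi0.ne') _
  rw [← Commute.geom_sum₂_mul (Commute.all h h'), pow_succ']
  exact mul_dvd_mul hgeom hh

theorem X_pow_dvd_comp_sub {f f' h h' : PowerSeries R} {k : ℕ} (hf : X ^ k ∣ f - f')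
    (hh : X ^ k ∣ h - h') : X ^ k ∣ PS.comp f h - PS.comp f' h' := by
  refine X_pow_dvd_iff.2 fun j hj => ?_
  rw [map_sub, coeff_comp, coeff_comp, ← Finset.sum_sub_distrib]
  refine Finset.sum_eq_zero fun i hi => ?_
  have hij : i ≤ j := Nat.lt_succ_iff.1 (Finset.mem_range.1 hi)
  have hpow : X ^ k ∣ h ^ i - h' ^ i := hh.trans (sub_dvd_pow_sub_pow h h' i)
  rw [coeff_eq_of_X_pow_dvd_sub hf (hij.trans_lt hj), coeff_eq_of_X_pow_dvd_sub hpow hj, sub_self]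

theorem X_pow_dvd_iter_sub {f g : PowerSeries R} {k : ℕ} (hfg : X ^ k ∣ f - g) (m : ℕ) :
    X ^ k ∣ PS.iter f m - PS.iter g m := by
  induction m with
  | zero => simp [PS.iter]
  | succ m ih => exact X_pow_dvd_comp_sub hfg ih

theorem coeff_comp_sub_coeff_comp {f g h h' : PowerSeries R} {k : ℕ} (hk : 2 ≤ k)
    (hfg : X ^ k ∣ f - g) (hh : X ^ k ∣ h - h') (h0 : constantCoeff h = 0)
    (h0' : constantCoeff h' = 0) :
    coeff k (PS.comp f h) - coeff k (PS.comp g h') =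
      coeff 1 f * (coeff k h - coeff k h') + coeff 1 h ^ k * (coeff k f - coeff k g) := by
  have hf1 : coeff 1 g = coeff 1 f := (coeff_eq_of_X_pow_dvd_sub hfg (by omega)).symm
  have hh1 : coeff 1 h' = coeff 1 h := (coeff_eq_of_X_pow_dvd_sub hh (by omega)).symm
  rw [coeff_comp, coeff_comp, ← Finset.sum_sub_distrib,
    Finset.sum_eq_add_of_mem 1 k (Finset.mem_range.2 (by omega))
      (Finset.mem_range.2 k.lt_succ_self) (by omega)]
  · rw [coeff_pow_self h0, coeff_pow_self h0', hf1, hh1, pow_one, pow_one]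
    ring
  · rintro i hi ⟨hi1, hik⟩
    have hik' : i < k := lt_of_le_of_ne (Nat.lt_succ_iff.1 (Finset.mem_range.1 hi)) hik
    rw [coeff_eq_of_X_pow_dvd_sub hfg hik',
      coeff_eq_of_X_pow_dvd_sub (X_pow_succ_dvd_pow_sub_pow h0 h0' hh hi1) k.lt_succ_self,
      sub_self]

theorem coeff_iter_succ_sub {f g : PowerSeries R} {k : ℕ} (hk : 2 ≤ k)
    (hf0 : constantCoeff f = 0) (hg0 : constantCoeff g = 0) (hfg : X ^ k ∣ f - g) (m : ℕ) :
    coeff k (PS.iter f (m + 1)) - coeff k (PS.iter g (m + 1)) =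
      coeff 1 f * (coeff k (PS.iter f m) - coeff k (PS.iter g m)) +
        (coeff 1 f ^ k) ^ m * (coeff k f - coeff k g) := by
  rw [PS.iter, PS.iter, coeff_comp_sub_coeff_comp hk hfg (X_pow_dvd_iter_sub hfg m)
    (constantCoeff_iter hf0 m) (constantCoeff_iter hg0 m), coeff_one_iter, ← pow_mul,
    ← pow_mul, mul_comm m k]

theorem coeff_iter_sub {f g : PowerSeries R} {k : ℕ} (hk : 2 ≤ k)
    (hf0 : constantCoeff f = 0) (hg0 : constantCoeff g = 0) (hfg : X ^ k ∣ f - g)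
    (hωk : coeff 1 f ^ k = coeff 1 f) (m : ℕ) :
    coeff k (PS.iter f m) - coeff k (PS.iter g m) =
      m * coeff 1 f ^ (m - 1) * (coeff k f - coeff k g) := by
  induction m with
  | zero => simp [PS.iter]
  | succ m ih =>
    rw [coeff_iter_succ_sub hk hf0 hg0 hfg, ih, hωk]
    cases m
    · simp
    · simp only [Nat.add_sub_cancel]
      push_cast
      ring

theorem coeff_eq_of_iter_eq [IsDomain R] {f g : PowerSeries R} {k n : ℕ} (hk : 2 ≤ k)
    (hf0 : constantCoeff f = 0) (hg0 : constantCoeff g = 0) (hfg : X ^ k ∣ f - g)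
    (hωk : coeff 1 f ^ k = coeff 1 f) (hω : coeff 1 f ≠ 0) (hn : (n : R) ≠ 0)
    (hiter : PS.iter f n = PS.iter g n) : coeff k f = coeff k g := by
  have h := coeff_iter_sub hk hf0 hg0 hfg hωk n
  rw [hiter, sub_self, eq_comm] at h
  exact sub_eq_zero.1 <| (mul_eq_zero.1 h).resolve_left (mul_ne_zero hn (pow_ne_zero _ hω))

end PS

theorem stmt_13 (F : Type*) [Field F] [CharZero F] (n : ℕ) (hn : 0 < n) (ω : F)
    (hω : IsPrimitiveRoot ω n) (f g : PowerSeries F)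
    (hf0 : PowerSeries.constantCoeff (R := F) f = 0) (hg0 : PowerSeries.constantCoeff (R := F) g = 0)
    (hf1 : PowerSeries.coeff (R := F) 1 f = ω) (hg1 : PowerSeries.coeff (R := F) 1 g = ω)
    (hordf : PS.HasOrder f n) (hordg : PS.HasOrder g n)
    (hagree : ∀ k : ℕ, k % n ≠ 1 % n → PowerSeries.coeff (R := F) k f = PowerSeries.coeff (R := F) k g) :
    f = g := by
  refine PS.ext_of_X_pow_dvd_sub fun k hfg => ?_
  by_cases hk : k % n = 1 % n
  · obtain rfl | rfl | hk2 : k = 0 ∨ k = 1 ∨ 2 ≤ k := by omega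
    · rw [coeff_zero_eq_constantCoeff_apply, coeff_zero_eq_constantCoeff_apply, hf0, hg0]
    · rw [hf1, hg1]
    have hωk : ω ^ k = ω :=
      ((hω.isOfFinOrder hn.ne').pow_inj_mod.2 (by rwa [← hω.eq_orderOf])).trans (pow_one ω)
    exact PS.coeff_eq_of_iter_eq hk2 hf0 hg0 hfg (by rw [hf1, hωk]) (hf1 ▸ hω.ne_zero hn.ne')
      (Nat.cast_ne_zero.2 hn.ne') (hordf.1.trans hordg.1.symm)
  · exact hagree k hk
end

section
/- If f ∈ G has compositional order 2 with linear coefficient −1, then f*(z) := (1/2)(z − f(z)) lies in G and conjugates f to ℓ₋₁: f* ∘ f ∘ (f*)⁻¹ = ℓ₋₁, where ℓ₋₁(z) = −z. -/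
open PowerSeries

/-! Since `f ∘ f = z`, we get `f* ∘ f = (f - z) / 2 = -f*`, hence
`f* ∘ f ∘ (f*)⁻¹ = -f* ∘ (f*)⁻¹ = -z`. The linear coefficient of `f*` is `(1 - (-1)) / 2 = 1`,
so `f*` has a compositional inverse: on series without constant term `PS.comp` is
`PowerSeries.subst`, for which Mathlib provides it (`PowerSeries.substInvOfIsUnit`). -/

theorem PowerSeries.subst_neg {R : Type*} [CommRing R] {a : PowerSeries R} (ha : HasSubst a)
    (f : PowerSeries R) : (-f).subst a = -f.subst a := by
  rw [← coe_substAlgHom ha, map_neg]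

namespace PS

variable {R : Type*} [CommRing R]

theorem comp_eq_subst (f : PowerSeries R) {g : PowerSeries R} (hg : constantCoeff g = 0) :
    comp f g = f.subst g := by
  ext k
  rw [coeff_subst' (HasSubst.of_constantCoeff_zero' hg), comp, coeff_mk]
  refine (finsum_eq_sum_of_support_subset _ fun n hn => ?_).symm
  rw [Finset.coe_range, Set.mem_Iio, Nat.lt_succ_iff]
  by_contra! hkn
  refine hn (mul_eq_zero_of_right _ (coeff_of_lt_order k ?_))
  exact (Nat.cast_lt.2 hkn).trans_le (le_order_pow_of_constantCoeff_eq_zero n hg)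

theorem iter_two {f : PowerSeries R} (hf : constantCoeff f = 0) : iter f 2 = f.subst f := by
  rw [iter, iter, iter, comp_eq_subst f constantCoeff_X, X_subst, comp_eq_subst f hf]

theorem X_sub_subst_of_subst_self {f : PowerSeries R} (hf : constantCoeff f = 0)
    (hff : f.subst f = X) : (X - f).subst f = -(X - f) := by
  rw [subst_sub (HasSubst.of_constantCoeff_zero' hf), subst_X (HasSubst.of_constantCoeff_zero' hf),
    hff, neg_sub]

end PS

theorem stmt_16 (F : Type*) [Field F] [CharZero F] (f : PowerSeries F) (hf : f ∈ PS.G F)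
    (hord : PS.HasOrder f 2) (h1 : PowerSeries.coeff (R := F) 1 f = -1)
    (fstar : PowerSeries F) (hstar : fstar = (2 : F)⁻¹ • (PowerSeries.X - f)) :
    fstar ∈ PS.G F ∧
    ∃ finv ∈ PS.G F, PS.comp fstar finv = PowerSeries.X ∧
      PS.comp finv fstar = PowerSeries.X ∧
      PS.comp (PS.comp fstar f) finv = PowerSeries.C (R := F) (-1) * PowerSeries.X := by
  obtain ⟨hf0, -⟩ := hf
  have hs0 : constantCoeff fstar = 0 := by simp [hstar, hf0]
  have hs1 : coeff 1 fstar = 1 := by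
    rw [hstar, map_smul, map_sub, coeff_one_X, h1, sub_neg_eq_add, one_add_one_eq_two, smul_eq_mul,
      inv_mul_cancel₀ two_ne_zero]
  have hunit : IsUnit (coeff 1 fstar) := by rw [hs1]; exact isUnit_one
  set finv := fstar.substInvOfIsUnit hunit
  have hinv0 : constantCoeff finv = 0 := constantCoeff_substInvOfIsUnit fstar hunit
  have hconj : fstar.subst f = -fstar := by
    rw [hstar, subst_smul (HasSubst.of_constantCoeff_zero' hf0),
      PS.X_sub_subst_of_subst_self hf0 (PS.iter_two hf0 ▸ hord.1), smul_neg]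
  refine ⟨⟨hs0, by simp [hs1]⟩, finv, ⟨hinv0, ?_⟩, ?_, ?_, ?_⟩
  · rw [coeff_one_substInvOfIsUnit]
    exact Units.ne_zero _
  · rw [PS.comp_eq_subst _ hinv0, subst_substInvOfIsUnit_right fstar hs0 hunit]
  · rw [PS.comp_eq_subst _ hs0, subst_substInvOfIsUnit_left fstar hs0 hunit]
  · rw [PS.comp_eq_subst _ hf0, hconj, PS.comp_eq_subst _ hinv0,
      subst_neg (HasSubst.of_constantCoeff_zero' hinv0),
      subst_substInvOfIsUnit_right fstar hs0 hunit, map_neg, map_one, neg_one_mul]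
end
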